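/- Assume the forms S_n pre-converge to S. Let w_n ∈ D(S_n) ∩ 𝓒 w-converge to w ∈ L²(E, ν) with sup_n ⟨A_n w_n, A_n w_n⟩_n < ∞, and let v_n ∈ D(S_n) ∩ 𝓒 s-converge to v ∈ D(S) in the sense of (ii) of pre-convergence (i.e. with sup_n ⟨A_n v_n, A_n v_n⟩_n < ∞ and limsup_n S_n(v_n, v_n) ≤ S(v, v)). Then w ∈ D(S), the limit lim_{n→∞} (S_n(v_n, w_n) + S_n(w_n, v_n)) exists, and it equals S(v, w) + S(w, v). -/

import Mathlib

/-!
Pre-convergence (i), applied to the `w`-convergent sequences `wₙ + s vₙ → w + s v` for a real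
parameter `s`, gives
`S(w, w) + s a + s² S(v, v) ≤ liminf (Sₙ(wₙ, wₙ) + s aₙ + s² Sₙ(vₙ, vₙ))`,
where `aₙ = Sₙ(vₙ, wₙ) + Sₙ(wₙ, vₙ)` and `a = S(v, w) + S(w, v)`. Since `Sₙ(wₙ, wₙ)` is
bounded above and `limsup Sₙ(vₙ, vₙ) ≤ S(v, v)`, dividing by `s` and letting `s → ±∞` squeezes
`aₙ` to `a`.

The upper bound `Sₙ(wₙ, wₙ) ≤ ‖Aₙ wₙ‖ ‖wₙ‖` needs `‖wₙ‖` to be bounded. If it were not, gluing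
`wₙ / ‖wₙ‖²` along a subsequence on the disjoint supports `Eₙ` would give a test function
`ψ ∈ 𝓒` with `⟨wₙ, ψ⟩ₙ = 1` along the subsequence but `⟨w, ψ⟩ = 0`.
-/

open MeasureTheory Filter Topology

noncomputable section

namespace Mosco

variable {E : Type*} [MeasurableSpace E]

/-- The inner product of two real-valued functions with respect to a measure,
`⟨φ, ψ⟩ = ∫ φ ψ dμ`. -/
def ip (μ : Measure E) (φ ψ : E → ℝ) : ℝ := ∫ x, φ x * ψ x ∂μ

/-- The framework of Section 2.1: mutually singular probability measures `ν n`, `n : ℕ`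
(`ν 0` playing the role of the limit measure `ν`), such that `L²(E, ν 0)` is separable,
together with disjoint sets `En n` carrying `ν n`, and a linear subset `F = 𝓕 ⊆ 𝓓`
which is dense in `L²(E, ν 0)`. -/
structure Frame (E : Type*) [MeasurableSpace E] where
  ν : ℕ → Measure E
  prob : ∀ n, IsProbabilityMeasure (ν n)
  singular : ∀ m n, m ≠ n → (ν m).MutuallySingular (ν n)
  separableL2 : TopologicalSpace.SeparableSpace (Lp ℝ 2 (ν 0))
  En : ℕ → Set E
  measEn : ∀ n, MeasurableSet (En n)
  disjEn : ∀ m n, m ≠ n → Disjoint (En m) (En n)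
  nullEn : ∀ n, ν n (En n)ᶜ = 0
  F : Set (E → ℝ)
  F_measurable : ∀ φ ∈ F, Measurable φ
  F_memL2 : ∀ φ ∈ F, ∀ n, MemLp φ 2 (ν n)
  F_tendsto : ∀ φ ∈ F, Tendsto (fun n => ip (ν n) φ φ) atTop (𝓝 (ip (ν 0) φ φ))
  F_linear : ∀ φ ∈ F, ∀ ψ ∈ F, ∀ a b : ℝ, (fun x => a * φ x + b * ψ x) ∈ F
  F_dense : ∀ f : E → ℝ, Measurable f → MemLp f 2 (ν 0) → ∀ ε : ℝ, 0 < ε →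
    ∃ φ ∈ F, ip (ν 0) (fun x => f x - φ x) (fun x => f x - φ x) < ε

/-- The set `𝓓`: everywhere defined measurable functions lying in every `L²(E, ν n)`
whose `ν n`-norms converge to the `ν 0`-norm. -/
def Frame.D (fr : Frame E) : Set (E → ℝ) :=
  {φ | Measurable φ ∧ (∀ n, MemLp φ 2 (fr.ν n)) ∧
    Tendsto (fun n => ip (fr.ν n) φ φ) atTop (𝓝 (ip (fr.ν 0) φ φ))}

/-- The set `𝓒`: elements of `𝓓` satisfying conditions (c1) and (c2). -/
def Frame.C (fr : Frame E) : Set (E → ℝ) :=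
  {φ | φ ∈ fr.D ∧ (∀ n, 1 ≤ n → ∃ g ∈ fr.F, φ =ᵐ[fr.ν n] g) ∧
    ∀ ψ ∈ fr.F, Tendsto (fun n => ip (fr.ν n) φ ψ) atTop (𝓝 (ip (fr.ν 0) φ ψ))}

/-- The set `𝓥` of multipliers mapping `𝓓` into `𝓓` and `𝓕` into `𝓕`. -/
def Frame.V (fr : Frame E) : Set (E → ℝ) :=
  {ψ | Measurable ψ ∧ (∀ n, MemLp ψ 2 (fr.ν n)) ∧
    (∀ σ ∈ fr.D, (fun x => σ x * ψ x) ∈ fr.D) ∧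
    (∀ τ ∈ fr.F, (fun x => τ x * ψ x) ∈ fr.F)}

/-- `w`-convergence of a sequence `φs` (with `φs n` regarded as an element of
`L²(E, ν n)`) to `φ ∈ L²(E, ν 0)`. -/
def Frame.WConv (fr : Frame E) (φs : ℕ → E → ℝ) (φ : E → ℝ) : Prop :=
  ∀ ψ ∈ fr.C, Tendsto (fun n => ip (fr.ν n) (φs n) ψ) atTop (𝓝 (ip (fr.ν 0) φ ψ))

/-- `s`-convergence: `w`-convergence together with convergence of the norms. -/
def Frame.SConv (fr : Frame E) (φs : ℕ → E → ℝ) (φ : E → ℝ) : Prop :=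
  fr.WConv φs φ ∧
  Tendsto (fun n => ip (fr.ν n) (φs n) (φs n)) atTop (𝓝 (ip (fr.ν 0) φ φ))

open Classical

/-- The `L²(μ)`-class of a function (zero if the function is not square-integrable). -/
def toL2 (μ : Measure E) (φ : E → ℝ) : Lp ℝ 2 μ :=
  if h : MemLp φ 2 μ then h.toLp φ else 0

/-- A strongly continuous semigroup of bounded linear operators on `L²(E, μ)`. -/
structure Semigroup2 {E : Type*} [MeasurableSpace E] (μ : Measure E) where
  T : ℝ → Lp ℝ 2 μ →L[ℝ] Lp ℝ 2 μ
  T_zero : T 0 = ContinuousLinearMap.id ℝ (Lp ℝ 2 μ)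
  T_add : ∀ s t : ℝ, 0 ≤ s → 0 ≤ t → T (s + t) = (T s).comp (T t)
  strongCont : ∀ f : Lp ℝ 2 μ, Tendsto (fun t => T t f) (𝓝[≥] (0:ℝ)) (𝓝 f)

namespace Semigroup2

variable {μ : Measure E}

/-- The semigroup is a contraction semigroup. -/
def IsContraction (sg : Semigroup2 μ) : Prop := ∀ t : ℝ, 0 ≤ t → ‖sg.T t‖ ≤ 1

/-- The adjoint (dual) semigroup `T'`. -/
def dual (sg : Semigroup2 μ) (t : ℝ) : Lp ℝ 2 μ →L[ℝ] Lp ℝ 2 μ :=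
  ContinuousLinearMap.adjoint (sg.T t)

/-- Membership in the domain `D(A)` of the generator. -/
def memDom (sg : Semigroup2 μ) (f : Lp ℝ 2 μ) : Prop :=
  ∃ g : Lp ℝ 2 μ, Tendsto (fun t : ℝ => t⁻¹ • (sg.T t f - f)) (𝓝[>] (0:ℝ)) (𝓝 g)

/-- The generator `A` (zero off its domain). -/
def gen (sg : Semigroup2 μ) (f : Lp ℝ 2 μ) : Lp ℝ 2 μ :=
  if h : sg.memDom f then Exists.choose h else 0

/-- Membership in the domain `D(A')` of the adjoint generator. -/
def memDom' (sg : Semigroup2 μ) (f : Lp ℝ 2 μ) : Prop :=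
  ∃ g : Lp ℝ 2 μ, Tendsto (fun t : ℝ => t⁻¹ • (sg.dual t f - f)) (𝓝[>] (0:ℝ)) (𝓝 g)

/-- The adjoint generator `A'` (zero off its domain). -/
def gen' (sg : Semigroup2 μ) (f : Lp ℝ 2 μ) : Lp ℝ 2 μ :=
  if h : sg.memDom' f then Exists.choose h else 0

/-- The resolvent `G_β = (β - A)⁻¹ = ∫_0^∞ e^{-βt} T_t dt`. -/
def res (sg : Semigroup2 μ) (β : ℝ) (f : Lp ℝ 2 μ) : Lp ℝ 2 μ :=
  ∫ t in Set.Ioi (0:ℝ), Real.exp (-β * t) • sg.T t f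

/-- The adjoint resolvent `G'_β`. -/
def res' (sg : Semigroup2 μ) (β : ℝ) (f : Lp ℝ 2 μ) : Lp ℝ 2 μ :=
  ∫ t in Set.Ioi (0:ℝ), Real.exp (-β * t) • sg.dual t f

/-- `u ∈ D(A) = D(S)`, at the level of functions. -/
def memD (sg : Semigroup2 μ) (u : E → ℝ) : Prop := sg.memDom (toL2 μ u)

/-- `u ∈ D(A')`, at the level of functions. -/
def memD' (sg : Semigroup2 μ) (u : E → ℝ) : Prop := sg.memDom' (toL2 μ u)

/-- `A u`, at the level of functions. -/
def Af (sg : Semigroup2 μ) (u : E → ℝ) : E → ℝ := sg.gen (toL2 μ u)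

/-- `A' u`, at the level of functions. -/
def Af' (sg : Semigroup2 μ) (u : E → ℝ) : E → ℝ := sg.gen' (toL2 μ u)

/-- `G_β u`, at the level of functions. -/
def Res (sg : Semigroup2 μ) (β : ℝ) (u : E → ℝ) : E → ℝ := sg.res β (toL2 μ u)

/-- `G'_β u`, at the level of functions. -/
def Res' (sg : Semigroup2 μ) (β : ℝ) (u : E → ℝ) : E → ℝ := sg.res' β (toL2 μ u)

/-- `T_t u`, at the level of functions. -/
def Tf (sg : Semigroup2 μ) (t : ℝ) (u : E → ℝ) : E → ℝ := sg.T t (toL2 μ u)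

/-- `T'_t u`, at the level of functions. -/
def Tf' (sg : Semigroup2 μ) (t : ℝ) (u : E → ℝ) : E → ℝ := sg.dual t (toL2 μ u)

/-- The bilinear form `S(u, v) = ⟨-A u, v⟩` associated with the semigroup. -/
def S (sg : Semigroup2 μ) (u v : E → ℝ) : ℝ := ip μ (fun x => -(sg.Af u x)) v

/-- `S_β(u, v) = β ⟨u, v⟩ + S(u, v)`. -/
def Sb (sg : Semigroup2 μ) (β : ℝ) (u v : E → ℝ) : ℝ := β * ip μ u v + sg.S u v

end Semigroup2

/-- Definition 2.4 (i) and (ii): the forms `S n` pre-converge to `S 0`.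
Here `sg n` is the semigroup on `L²(E, ν n)` and `sg 0` the limiting one. -/
def PreConv (fr : Frame E) (sg : ∀ n, Semigroup2 (fr.ν n)) : Prop :=
  (∀ φ : E → ℝ, Measurable φ → MemLp φ 2 (fr.ν 0) →
    ∀ nk : ℕ → ℕ, StrictMono nk →
    ∀ φk : ℕ → E → ℝ, (∀ k, φk k ∈ fr.C ∧ (sg (nk k)).memD (φk k)) →
    (∀ ψ ∈ fr.C, Tendsto (fun k => ip (fr.ν (nk k)) (φk k) ψ)
      atTop (𝓝 (ip (fr.ν 0) φ ψ))) →
    (∃ M : ℝ, ∀ k, ip (fr.ν (nk k)) ((sg (nk k)).Af (φk k)) ((sg (nk k)).Af (φk k)) ≤ M) →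
    (sg 0).memD φ ∧
      (sg 0).S φ φ ≤ liminf (fun k => (sg (nk k)).S (φk k) (φk k)) atTop) ∧
  (∀ ψ : E → ℝ, Measurable ψ → MemLp ψ 2 (fr.ν 0) → (sg 0).memD ψ →
    ∃ ψs : ℕ → E → ℝ, (∀ n, ψs n ∈ fr.C ∧ (sg n).memD (ψs n)) ∧
      fr.SConv ψs ψ ∧
      (∃ M : ℝ, ∀ n, ip (fr.ν n) ((sg n).Af (ψs n)) ((sg n).Af (ψs n)) ≤ M) ∧
      limsup (fun n => (sg n).S (ψs n) (ψs n)) atTop ≤ (sg 0).S ψ ψ)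

/-- Condition (iii) of Definition 2.4. -/
def CondIII (fr : Frame E) (sg : ∀ n, Semigroup2 (fr.ν n)) : Prop :=
  ∀ β : ℝ, 0 < β →
  ∀ u : E → ℝ, Measurable u → MemLp u 2 (fr.ν 0) → (sg 0).memD u →
  ∀ us : ℕ → E → ℝ,
    (∀ n, us n ∈ fr.C ∧ (sg n).memD (us n) ∧ ∃ c ∈ fr.C, (sg n).Af (us n) =ᵐ[fr.ν n] c) →
    (∃ w : E → ℝ, Measurable w ∧ MemLp w 2 (fr.ν 0) ∧ fr.WConv us w) →
    (∃ M : ℝ, ∀ n, ip (fr.ν n) ((sg n).Af (us n)) ((sg n).Af (us n)) ≤ M) →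
    (∀ ψ ∈ fr.C, ∀ ψs : ℕ → E → ℝ, (∀ n, ψs n ∈ fr.C) → fr.SConv ψs ψ →
      Tendsto (fun n => (sg n).Sb β (us n) (ψs n)) atTop (𝓝 ((sg 0).Sb β u ψ))) →
    ∀ ψ : E → ℝ, Measurable ψ → MemLp ψ 2 (fr.ν 0) → (sg 0).memD ψ →
    ∀ ψs : ℕ → E → ℝ, (∀ n, ψs n ∈ fr.C ∧ (sg n).memD (ψs n)) → fr.SConv ψs ψ →
      (∃ M : ℝ, ∀ n, ip (fr.ν n) ((sg n).Af (ψs n)) ((sg n).Af (ψs n)) ≤ M) →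
      limsup (fun n => (sg n).S (ψs n) (ψs n)) atTop ≤ (sg 0).S ψ ψ →
      Tendsto (fun n => (sg n).Sb β (ψs n) (us n)) atTop (𝓝 ((sg 0).Sb β ψ u))

/-- Condition (iv) of Lemma 2.6. -/
def CondIV (fr : Frame E) (sg : ∀ n, Semigroup2 (fr.ν n)) : Prop :=
  ∀ β : ℝ, 0 < β →
  ∀ u : E → ℝ, Measurable u → MemLp u 2 (fr.ν 0) → (sg 0).memD u →
  ∀ us : ℕ → E → ℝ,
    (∀ n, us n ∈ fr.C ∧ (sg n).memD (us n) ∧ ∃ c ∈ fr.C, (sg n).Af (us n) =ᵐ[fr.ν n] c) →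
    (∃ w : E → ℝ, Measurable w ∧ MemLp w 2 (fr.ν 0) ∧ fr.WConv us w) →
    (∃ M : ℝ, ∀ n, ip (fr.ν n) ((sg n).Af (us n)) ((sg n).Af (us n)) ≤ M) →
    fr.WConv (fun n x => β * us n x - (sg n).Af (us n) x)
      (fun x => β * u x - (sg 0).Af u x) →
    fr.WConv us u

/-- The forms converge: pre-convergence together with condition (iii). -/
def Conv (fr : Frame E) (sg : ∀ n, Semigroup2 (fr.ν n)) : Prop :=
  PreConv fr sg ∧ CondIII fr sg

/-- Condition (c3): resolvents and adjoint resolvents of elements of `𝓒`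
coincide a.e. with elements of `𝓒`. -/
def CondC3 (fr : Frame E) (sg : ∀ n, Semigroup2 (fr.ν n)) : Prop :=
  ∀ g ∈ fr.C, ∀ β : ℝ, 0 < β →
    (∃ u ∈ fr.C, (sg 0).Res β g =ᵐ[fr.ν 0] u) ∧
    (∀ n, 1 ≤ n → ∃ u ∈ fr.C, (sg n).Res β g =ᵐ[fr.ν n] u) ∧
    (∃ u ∈ fr.C, (sg 0).Res' β g =ᵐ[fr.ν 0] u) ∧
    (∀ n, 1 ≤ n → ∃ u ∈ fr.C, (sg n).Res' β g =ᵐ[fr.ν n] u)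

/-- Condition (c4): `D(S) ⊆ 𝓒` and `A(D(S)) ⊆ 𝓒`, up to `ν 0`-a.e. equality. -/
def CondC4 (fr : Frame E) (sg : ∀ n, Semigroup2 (fr.ν n)) : Prop :=
  ∀ φ : E → ℝ, Measurable φ → MemLp φ 2 (fr.ν 0) → (sg 0).memD φ →
    (∃ u ∈ fr.C, φ =ᵐ[fr.ν 0] u) ∧ (∃ u ∈ fr.C, (sg 0).Af φ =ᵐ[fr.ν 0] u)

/-- Condition (c5): semigroups and adjoint semigroups applied to elements of `𝓒`
coincide a.e. with elements of `𝓒`. -/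
def CondC5 (fr : Frame E) (sg : ∀ n, Semigroup2 (fr.ν n)) : Prop :=
  ∀ g ∈ fr.C, ∀ t : ℝ, 0 ≤ t →
    (∃ u ∈ fr.C, (sg 0).Tf t g =ᵐ[fr.ν 0] u) ∧
    (∀ n, 1 ≤ n → ∃ u ∈ fr.C, (sg n).Tf t g =ᵐ[fr.ν n] u) ∧
    (∃ u ∈ fr.C, (sg 0).Tf' t g =ᵐ[fr.ν 0] u) ∧
    (∀ n, 1 ≤ n → ∃ u ∈ fr.C, (sg n).Tf' t g =ᵐ[fr.ν n] u)

open Function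
open scoped InnerProductSpace

lemma tendsto_of_forall_approx {a : ℕ → ℝ} {a₀ : ℝ}
    (h : ∀ ε > 0, ∃ (b : ℕ → ℝ) (b₀ : ℝ), Tendsto b atTop (𝓝 b₀) ∧
      (∀ᶠ n in atTop, |a n - b n| < ε) ∧ |a₀ - b₀| < ε) :
    Tendsto a atTop (𝓝 a₀) := by
  refine Metric.tendsto_nhds.2 fun ε hε => ?_
  obtain ⟨b, b₀, hb, hab, hab₀⟩ := h (ε / 3) (by positivity)
  filter_upwards [hab, Metric.tendsto_nhds.1 hb (ε / 3) (by positivity)] with n hn hbn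
  rw [Real.dist_eq] at hbn ⊢
  rw [abs_lt] at hn hbn hab₀ ⊢
  constructor <;> linarith [hn.1, hn.2, hbn.1, hbn.2, hab₀.1, hab₀.2]

lemma tendsto_of_tendsto_comp_of_eq_zero_off_range {α : Type*} [TopologicalSpace α] [Zero α]
    {c : ℕ → α} {nk : ℕ → ℕ} (hnk : StrictMono nk) (h : Tendsto (c ∘ nk) atTop (𝓝 0))
    (hoff : ∀ m ∉ Set.range nk, c m = 0) : Tendsto c atTop (𝓝 0) := by
  intro U hU
  obtain ⟨K, hK⟩ := eventually_atTop.1 (h hU)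
  refine eventually_atTop.2 ⟨nk K, fun m hm => ?_⟩
  by_cases hrange : m ∈ Set.range nk
  · obtain ⟨k, rfl⟩ := hrange
    exact hK k (hnk.le_iff_le.1 hm)
  · simpa [hoff m hrange] using mem_of_mem_nhds hU

section QuadraticLiminf

variable {f a e : ℕ → ℝ} {f₀ a₀ e₀ : ℝ}

lemma eventually_sub_lt_of_forall_le_liminf (hf : IsBoundedUnder (· ≤ ·) atTop f)
    (he : IsBoundedUnder (· ≤ ·) atTop e) (he₀ : limsup e atTop ≤ e₀)
    (hbdd : ∀ s : ℝ, IsBoundedUnder (· ≥ ·) atTop fun n => f n + s * a n + s ^ 2 * e n)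
    (hlim : ∀ s : ℝ, f₀ + s * a₀ + s ^ 2 * e₀ ≤
      liminf (fun n => f n + s * a n + s ^ 2 * e n) atTop)
    {δ : ℝ} (hδ : 0 < δ) : ∀ᶠ n in atTop, a₀ - a n < δ := by
  obtain ⟨C, hC⟩ := hf.eventually_le
  obtain ⟨s, hCs, hs⟩ := (((tendsto_id.atTop_mul_const (half_pos hδ)).eventually_gt_atTop
    (C - f₀)).and (eventually_gt_atTop 0)).exists
  obtain ⟨η, hη, hηs⟩ := exists_pos_mul_lt (mul_pos hs (half_pos hδ)) (1 + s ^ 2)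
  have hcombo : ∀ᶠ n in atTop, f₀ + s * a₀ + s ^ 2 * e₀ - η < f n + s * a n + s ^ 2 * e n :=
    eventually_lt_of_lt_liminf ((sub_lt_self _ hη).trans_le (hlim s)) (hbdd s)
  have he_lt : ∀ᶠ n in atTop, e n < e₀ + η :=
    eventually_lt_of_limsup_lt (he₀.trans_lt (lt_add_of_pos_right _ hη)) he
  filter_upwards [hC, hcombo, he_lt] with n hfn hcn hen
  have hse : s ^ 2 * e n ≤ s ^ 2 * (e₀ + η) := mul_le_mul_of_nonneg_left hen.le (sq_nonneg s)
  have : s * (a₀ - a n) < s * δ := by simp only [id] at hCs; linarith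
  exact lt_of_mul_lt_mul_left this hs.le

theorem tendsto_of_forall_le_liminf_quadratic (hf : IsBoundedUnder (· ≤ ·) atTop f)
    (he : IsBoundedUnder (· ≤ ·) atTop e) (he₀ : limsup e atTop ≤ e₀)
    (hbdd : ∀ s : ℝ, IsBoundedUnder (· ≥ ·) atTop fun n => f n + s * a n + s ^ 2 * e n)
    (hlim : ∀ s : ℝ, f₀ + s * a₀ + s ^ 2 * e₀ ≤
      liminf (fun n => f n + s * a n + s ^ 2 * e n) atTop) :
    Tendsto a atTop (𝓝 a₀) := by
  refine tendsto_order.2 ⟨fun b hb => ?_, fun b hb => ?_⟩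
  · filter_upwards [eventually_sub_lt_of_forall_le_liminf hf he he₀ hbdd hlim (sub_pos.2 hb)]
      with n hn
    linarith
  · have hneg := eventually_sub_lt_of_forall_le_liminf (a := -a) (a₀ := -a₀) hf he he₀
      (fun s => by simpa using hbdd (-s)) (fun s => by simpa using hlim (-s)) (sub_pos.2 hb)
    filter_upwards [hneg] with n hn
    simp only [Pi.neg_apply] at hn
    linarith

end QuadraticLiminf

section InnerProduct

variable {μ : Measure E} {φ φ' ψ ψ' χ : E → ℝ}

lemma integrable_mul_of_memLp_two (hφ : MemLp φ 2 μ) (hψ : MemLp ψ 2 μ) :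
    Integrable (fun x => φ x * ψ x) μ :=
  hφ.integrable_mul hψ

lemma ip_congr (hφ : φ =ᵐ[μ] φ') (hψ : ψ =ᵐ[μ] ψ') : ip μ φ ψ = ip μ φ' ψ' :=
  integral_congr_ae (hφ.mul hψ)

lemma ip_eq_zero_of_ae_eq_zero (hφ : φ =ᵐ[μ] 0) : ip μ φ ψ = 0 := by
  rw [ip_congr hφ EventuallyEq.rfl]
  simp [ip]

lemma ip_comm (μ : Measure E) (φ ψ : E → ℝ) : ip μ φ ψ = ip μ ψ φ := by
  simp only [ip, mul_comm]

lemma ip_const_mul_left (c : ℝ) (φ ψ : E → ℝ) :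
    ip μ (fun x => c * φ x) ψ = c * ip μ φ ψ := by
  simp only [ip, mul_assoc, integral_const_mul]

lemma ip_const_mul_right (c : ℝ) (φ ψ : E → ℝ) :
    ip μ φ (fun x => c * ψ x) = c * ip μ φ ψ := by
  rw [ip_comm, ip_const_mul_left, ip_comm]

lemma ip_add_const_mul_left (c : ℝ) (hφ : MemLp φ 2 μ) (hχ : MemLp χ 2 μ) (hψ : MemLp ψ 2 μ) :
    ip μ (fun x => φ x + c * χ x) ψ = ip μ φ ψ + c * ip μ χ ψ := by
  simp only [ip, add_mul, mul_assoc]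
  rw [integral_add (integrable_mul_of_memLp_two hφ hψ)
    ((integrable_mul_of_memLp_two hχ hψ).const_mul c), integral_const_mul]

lemma ip_add_const_mul_self (c : ℝ) (hφ : MemLp φ 2 μ) (hχ : MemLp χ 2 μ) :
    ip μ (fun x => φ x + c * χ x) (fun x => φ x + c * χ x)
      = ip μ φ φ + c * (ip μ χ φ + ip μ φ χ) + c ^ 2 * ip μ χ χ := by
  have hφχ : MemLp (fun x => φ x + c * χ x) 2 μ := hφ.add (hχ.const_mul c)
  rw [ip_add_const_mul_left c hφ hχ hφχ, ip_comm μ φ, ip_comm μ χ,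
    ip_add_const_mul_left c hφ hχ hφ, ip_add_const_mul_left c hφ hχ hχ, ip_comm μ φ χ]
  ring

lemma ip_eq_inner (hφ : MemLp φ 2 μ) (hψ : MemLp ψ 2 μ) :
    ip μ φ ψ = ⟪toL2 μ φ, toL2 μ ψ⟫_ℝ := by
  rw [toL2, dif_pos hφ, toL2, dif_pos hψ, L2.inner_def]
  refine integral_congr_ae ?_
  filter_upwards [hφ.coeFn_toLp, hψ.coeFn_toLp] with x h1 h2
  simp [h1, h2, mul_comm]

lemma toL2_coeFn (f : Lp ℝ 2 μ) : toL2 μ f = f := by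
  rw [toL2, dif_pos (Lp.memLp f), Lp.toLp_coeFn]

lemma norm_toL2_eq_sqrt (hφ : MemLp φ 2 μ) : ‖toL2 μ φ‖ = √(ip μ φ φ) := by
  rw [ip_eq_inner hφ hφ, real_inner_self_eq_norm_sq, Real.sqrt_sq (norm_nonneg _)]

lemma abs_ip_le (hφ : MemLp φ 2 μ) (hψ : MemLp ψ 2 μ) :
    |ip μ φ ψ| ≤ √(ip μ φ φ) * √(ip μ ψ ψ) := by
  rw [ip_eq_inner hφ hψ, ← norm_toL2_eq_sqrt hφ, ← norm_toL2_eq_sqrt hψ]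
  exact abs_real_inner_le_norm _ _

lemma toL2_add_const_mul (c : ℝ) (hφ : MemLp φ 2 μ) (hχ : MemLp χ 2 μ) :
    toL2 μ (fun x => φ x + c * χ x) = toL2 μ φ + c • toL2 μ χ := by
  have hφχ : MemLp (fun x => φ x + c * χ x) 2 μ := hφ.add (hχ.const_mul c)
  rw [toL2, dif_pos hφχ, toL2, dif_pos hφ, toL2, dif_pos hχ]
  refine Lp.ext ?_
  filter_upwards [hφχ.coeFn_toLp, hφ.coeFn_toLp, hχ.coeFn_toLp,
    Lp.coeFn_add (hφ.toLp φ) (c • hχ.toLp χ), Lp.coeFn_smul c (hχ.toLp χ)]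
    with x h0 h1 h2 h3 h4
  rw [h0, h3, Pi.add_apply, h4, Pi.smul_apply, h1, h2, smul_eq_mul]

end InnerProduct

lemma tendsto_ip_add_const_mul_self {μ : ℕ → Measure E} {φ χ : E → ℝ}
    (hφ : ∀ n, MemLp φ 2 (μ n)) (hχ : ∀ n, MemLp χ 2 (μ n))
    (hφφ : Tendsto (fun n => ip (μ n) φ φ) atTop (𝓝 (ip (μ 0) φ φ)))
    (hχχ : Tendsto (fun n => ip (μ n) χ χ) atTop (𝓝 (ip (μ 0) χ χ)))
    (hφχ : Tendsto (fun n => ip (μ n) φ χ) atTop (𝓝 (ip (μ 0) φ χ))) (c : ℝ) :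
    Tendsto (fun n => ip (μ n) (fun x => φ x + c * χ x) (fun x => φ x + c * χ x)) atTop
      (𝓝 (ip (μ 0) (fun x => φ x + c * χ x) (fun x => φ x + c * χ x))) := by
  have h n := ip_add_const_mul_self c (hφ n) (hχ n)
  simp only [h, ip_comm _ χ φ]
  exact (hφφ.add ((hφχ.add hφχ).const_mul c)).add (hχχ.const_mul _)

namespace Semigroup2

variable {μ : Measure E} {sg : Semigroup2 μ} {f g : Lp ℝ 2 μ}

lemma tendsto_gen (h : sg.memDom f) :
    Tendsto (fun t : ℝ => t⁻¹ • (sg.T t f - f)) (𝓝[>] 0) (𝓝 (sg.gen f)) := by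
  rw [gen, dif_pos h]
  exact h.choose_spec

lemma tendsto_gen_add_smul (hf : sg.memDom f) (hg : sg.memDom g) (c : ℝ) :
    Tendsto (fun t : ℝ => t⁻¹ • (sg.T t (f + c • g) - (f + c • g))) (𝓝[>] 0)
      (𝓝 (sg.gen f + c • sg.gen g)) := by
  have h : (fun t : ℝ => t⁻¹ • (sg.T t (f + c • g) - (f + c • g)))
      = fun t : ℝ => t⁻¹ • (sg.T t f - f) + c • (t⁻¹ • (sg.T t g - g)) := by
    funext t
    rw [map_add, map_smul]
    module
  rw [h]
  exact (tendsto_gen hf).add ((tendsto_gen hg).const_smul c)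

lemma memDom_add_smul (hf : sg.memDom f) (hg : sg.memDom g) (c : ℝ) :
    sg.memDom (f + c • g) :=
  ⟨_, tendsto_gen_add_smul hf hg c⟩

lemma gen_add_smul (hf : sg.memDom f) (hg : sg.memDom g) (c : ℝ) :
    sg.gen (f + c • g) = sg.gen f + c • sg.gen g :=
  tendsto_nhds_unique (tendsto_gen (memDom_add_smul hf hg c)) (tendsto_gen_add_smul hf hg c)

/-- Dissipativity: `⟪Tₜ f, f⟫ ≤ ‖f‖²` for a contraction, so the difference quotients are `≤ 0`. -/
lemma inner_gen_self_nonpos (hc : sg.IsContraction) (h : sg.memDom f) :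
    ⟪sg.gen f, f⟫_ℝ ≤ 0 := by
  refine le_of_tendsto ((tendsto_gen h).inner tendsto_const_nhds) ?_
  filter_upwards [self_mem_nhdsWithin] with t (ht : 0 < t)
  have hTf : ⟪sg.T t f, f⟫_ℝ ≤ ‖f‖ ^ 2 :=
    calc ⟪sg.T t f, f⟫_ℝ ≤ ‖sg.T t f‖ * ‖f‖ := real_inner_le_norm _ _
      _ ≤ (1 * ‖f‖) * ‖f‖ := by gcongr; exact (sg.T t).le_of_opNorm_le (hc t ht.le) f
      _ = ‖f‖ ^ 2 := by ring
  rw [real_inner_smul_left, inner_sub_left, real_inner_self_eq_norm_sq]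
  exact mul_nonpos_of_nonneg_of_nonpos (inv_nonneg.2 ht.le) (by linarith)

variable {u v : E → ℝ}

lemma S_eq_neg_inner (hv : MemLp v 2 μ) :
    sg.S u v = -⟪sg.gen (toL2 μ u), toL2 μ v⟫_ℝ := by
  have h : (fun x => -sg.Af u x) =ᵐ[μ] ⇑(-sg.gen (toL2 μ u)) :=
    (Lp.coeFn_neg _).symm
  rw [S, ip_congr h EventuallyEq.rfl, ip_eq_inner (Lp.memLp _) hv, toL2_coeFn, inner_neg_left]

lemma S_self_nonneg (hc : sg.IsContraction) (hu : sg.memD u) (hu2 : MemLp u 2 μ) :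
    0 ≤ sg.S u u := by
  rw [S_eq_neg_inner hu2, neg_nonneg]
  exact inner_gen_self_nonpos hc hu

lemma memD_add_const_mul (hu : sg.memD u) (hv : sg.memD v) (hu2 : MemLp u 2 μ)
    (hv2 : MemLp v 2 μ) (c : ℝ) : sg.memD (fun x => u x + c * v x) := by
  rw [memD, toL2_add_const_mul c hu2 hv2]
  exact memDom_add_smul hu hv c

lemma S_add_const_mul_self (hu : sg.memD u) (hv : sg.memD v) (hu2 : MemLp u 2 μ)
    (hv2 : MemLp v 2 μ) (c : ℝ) :
    sg.S (fun x => u x + c * v x) (fun x => u x + c * v x)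
      = sg.S u u + c * (sg.S v u + sg.S u v) + c ^ 2 * sg.S v v := by
  have huv2 : MemLp (fun x => u x + c * v x) 2 μ := hu2.add (hv2.const_mul c)
  rw [S_eq_neg_inner huv2, S_eq_neg_inner (u := u) hu2, S_eq_neg_inner (u := u) hv2,
    S_eq_neg_inner (u := v) hu2, S_eq_neg_inner (u := v) hv2, toL2_add_const_mul c hu2 hv2,
    gen_add_smul hu hv c]
  simp only [inner_add_left, inner_add_right, real_inner_smul_left, real_inner_smul_right]
  ring

lemma ip_Af_self (sg : Semigroup2 μ) (u : E → ℝ) :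
    ip μ (sg.Af u) (sg.Af u) = ‖sg.gen (toL2 μ u)‖ ^ 2 := by
  rw [Af, ip_eq_inner (Lp.memLp _) (Lp.memLp _), toL2_coeFn, real_inner_self_eq_norm_sq]

lemma abs_S_le (hv2 : MemLp v 2 μ) :
    |sg.S u v| ≤ √(ip μ (sg.Af u) (sg.Af u)) * √(ip μ v v) := by
  rw [S_eq_neg_inner hv2, abs_neg, ip_Af_self, Real.sqrt_sq (norm_nonneg _),
    ← norm_toL2_eq_sqrt hv2]
  exact abs_real_inner_le_norm _ _

lemma ip_Af_add_const_mul_le (hu : sg.memD u) (hv : sg.memD v) (hu2 : MemLp u 2 μ)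
    (hv2 : MemLp v 2 μ) (c : ℝ) {Mu Mv : ℝ} (hMu : ip μ (sg.Af u) (sg.Af u) ≤ Mu)
    (hMv : ip μ (sg.Af v) (sg.Af v) ≤ Mv) :
    ip μ (sg.Af fun x => u x + c * v x) (sg.Af fun x => u x + c * v x)
      ≤ (√Mu + |c| * √Mv) ^ 2 := by
  rw [ip_Af_self] at hMu hMv ⊢
  rw [toL2_add_const_mul c hu2 hv2, gen_add_smul hu hv c]
  gcongr
  calc ‖sg.gen (toL2 μ u) + c • sg.gen (toL2 μ v)‖
      ≤ ‖sg.gen (toL2 μ u)‖ + |c| * ‖sg.gen (toL2 μ v)‖ := by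
        simpa [norm_smul] using norm_add_le (sg.gen (toL2 μ u)) (c • sg.gen (toL2 μ v))
    _ ≤ √Mu + |c| * √Mv := by
        gcongr <;> exact Real.le_sqrt_of_sq_le ‹_›

end Semigroup2

lemma isBoundedUnder_S_self {μ : ℕ → Measure E} {sg : ∀ n, Semigroup2 (μ n)}
    {us : ℕ → E → ℝ} (hus2 : ∀ n, MemLp (us n) 2 (μ n))
    (hA : ∃ M : ℝ, ∀ n, ip (μ n) ((sg n).Af (us n)) ((sg n).Af (us n)) ≤ M)
    (hnorm : IsBoundedUnder (· ≤ ·) atTop fun n => ip (μ n) (us n) (us n)) :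
    IsBoundedUnder (· ≤ ·) atTop fun n => (sg n).S (us n) (us n) := by
  obtain ⟨M, hM⟩ := hA
  obtain ⟨B, hB⟩ := hnorm.eventually_le
  refine isBoundedUnder_of_eventually_le (a := √M * √B) ?_
  filter_upwards [hB] with n hn
  exact (le_abs_self _).trans ((Semigroup2.abs_S_le (hus2 n)).trans
    (by gcongr; exact hM n))

def glue {X : Type*} (s : ℕ → Set X) (h : ℕ → X → ℝ) (x : X) : ℝ :=
  ∑' k, (s k).indicator (h k) x

section Glue

variable {X : Type*} {s : ℕ → Set X} {h : ℕ → X → ℝ} {x : X}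

lemma glue_eq_of_mem (hs : Pairwise (Disjoint on s)) {k : ℕ} (hx : x ∈ s k) :
    glue s h x = h k x := by
  rw [glue, tsum_eq_single k fun j hj =>
    Set.indicator_of_notMem (Set.disjoint_left.1 (hs hj.symm) hx) _, Set.indicator_of_mem hx]

lemma glue_eq_zero (hx : ∀ k, x ∉ s k) : glue s h x = 0 := by
  simp [glue, Set.indicator_of_notMem (hx _)]

lemma hasSum_glue (hs : Pairwise (Disjoint on s)) (x : X) :
    HasSum (fun k => (s k).indicator (h k) x) (glue s h x) := by
  by_cases hx : ∃ k, x ∈ s k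
  · obtain ⟨k, hk⟩ := hx
    rw [glue_eq_of_mem hs hk, ← Set.indicator_of_mem hk (h k)]
    exact hasSum_single k fun j hj =>
      Set.indicator_of_notMem (Set.disjoint_left.1 (hs hj.symm) hk) _
  · rw [glue_eq_zero (not_exists.1 hx)]
    simp [Set.indicator_of_notMem (not_exists.1 hx _)]

variable [MeasurableSpace X]

lemma measurable_glue (hs : Pairwise (Disjoint on s)) (hsm : ∀ k, MeasurableSet (s k))
    (hh : ∀ k, Measurable (h k)) : Measurable (glue s h) :=
  measurable_of_tendsto_metrizable
    (fun _ => Finset.measurable_sum _ fun k _ => (hh k).indicator (hsm k))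
    (tendsto_pi_nhds.2 fun x => (hasSum_glue hs x).tendsto_sum_nat)

lemma glue_ae_eq (hs : Pairwise (Disjoint on s)) {μ : Measure X} {k : ℕ}
    (hμ : ∀ᵐ x ∂μ, x ∈ s k) : glue s h =ᵐ[μ] h k :=
  hμ.mono fun _ hx => glue_eq_of_mem hs hx

lemma glue_ae_eq_zero {μ : Measure X} (hμ : ∀ k, ∀ᵐ x ∂μ, x ∉ s k) :
    glue s h =ᵐ[μ] 0 :=
  (ae_all_iff.2 hμ).mono fun _ hx => glue_eq_zero hx

end Glue

namespace Frame

variable (fr : Frame E) {φ χ : E → ℝ}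

lemma zero_mem_F : (fun _ : E => (0 : ℝ)) ∈ fr.F := by
  obtain ⟨φ, hφ, -⟩ := fr.F_dense 0 measurable_const MemLp.zero 1 one_pos
  simpa using fr.F_linear φ hφ φ hφ 0 0

variable {fr}

lemma const_mul_mem_F (hφ : φ ∈ fr.F) (c : ℝ) : (fun x => c * φ x) ∈ fr.F := by
  simpa using fr.F_linear φ hφ φ hφ c 0

lemma add_const_mul_mem_F (hφ : φ ∈ fr.F) (hχ : χ ∈ fr.F) (c : ℝ) :
    (fun x => φ x + c * χ x) ∈ fr.F := by
  simpa using fr.F_linear φ hφ χ hχ 1 c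

lemma memLp_of_mem_C (hφ : φ ∈ fr.C) (n : ℕ) : MemLp φ 2 (fr.ν n) := hφ.1.2.1 n

/-- Condition (c2) extends from test functions in `𝓕` to test functions in `𝓒`, by density
of `𝓕` and the convergence of the norms in `𝓓`. -/
lemma tendsto_ip_of_mem_C (hφ : φ ∈ fr.C) (hχ : χ ∈ fr.C) :
    Tendsto (fun n => ip (fr.ν n) φ χ) atTop (𝓝 (ip (fr.ν 0) φ χ)) := by
  obtain ⟨⟨-, hφ2, hφφ⟩, -, hφF⟩ := hφ
  obtain ⟨⟨hχm, hχ2, hχχ⟩, -, hχF⟩ := hχ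
  refine tendsto_of_forall_approx fun ε hε => ?_
  set r := √(ip (fr.ν 0) φ φ) + 1
  obtain ⟨ψ, hψF, hψ⟩ := fr.F_dense χ hχm (hχ2 0) ((ε / r) ^ 2) (by positivity)
  have hψ2 := fr.F_memL2 ψ hψF
  set d := fun x => χ x + (-1) * ψ x
  have hsub : (fun x => χ x - ψ x) = d := by ext x; simp [d, sub_eq_add_neg]
  rw [hsub] at hψ
  have hdd : Tendsto (fun n => ip (fr.ν n) d d) atTop (𝓝 (ip (fr.ν 0) d d)) :=
    tendsto_ip_add_const_mul_self hχ2 hψ2 hχχ (fr.F_tendsto ψ hψF) (hχF ψ hψF) (-1)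
  have hbound : ∀ n, |ip (fr.ν n) φ χ - ip (fr.ν n) φ ψ|
      ≤ √(ip (fr.ν n) φ φ) * √(ip (fr.ν n) d d) := fun n => by
    have hd : ip (fr.ν n) φ χ - ip (fr.ν n) φ ψ = ip (fr.ν n) d φ := by
      rw [ip_add_const_mul_left _ (hχ2 n) (hψ2 n) (hφ2 n), ip_comm _ χ, ip_comm _ ψ]
      ring
    rw [hd, mul_comm]
    exact abs_ip_le ((hχ2 n).add ((hψ2 n).const_mul _)) (hφ2 n)
  have hd0 : √(ip (fr.ν 0) φ φ) * √(ip (fr.ν 0) d d) < ε :=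
    calc √(ip (fr.ν 0) φ φ) * √(ip (fr.ν 0) d d) ≤ √(ip (fr.ν 0) φ φ) * (ε / r) := by
          gcongr
          exact (Real.sqrt_le_sqrt hψ.le).trans_eq (Real.sqrt_sq (by positivity))
      _ < r * (ε / r) := by gcongr; exact lt_add_one _
      _ = ε := mul_div_cancel₀ _ (by positivity)
  refine ⟨_, _, hφF ψ hψF, ?_, (hbound 0).trans_lt hd0⟩
  filter_upwards [(hφφ.sqrt.mul hdd.sqrt).eventually_lt_const hd0] with n hn
  exact (hbound n).trans_lt hn

lemma add_const_mul_mem_C (hφ : φ ∈ fr.C) (hχ : χ ∈ fr.C) (c : ℝ) :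
    (fun x => φ x + c * χ x) ∈ fr.C := by
  have hφχ := tendsto_ip_of_mem_C hφ hχ
  obtain ⟨⟨hφm, hφ2, hφφ⟩, hφF, hφψ⟩ := hφ
  obtain ⟨⟨hχm, hχ2, hχχ⟩, hχF, hχψ⟩ := hχ
  refine ⟨⟨hφm.add (hχm.const_mul c), fun n => (hφ2 n).add ((hχ2 n).const_mul c),
    tendsto_ip_add_const_mul_self hφ2 hχ2 hφφ hχχ hφχ c⟩, fun n hn => ?_, fun ψ hψ => ?_⟩
  · obtain ⟨gφ, hgφ, hφg⟩ := hφF n hn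
    obtain ⟨gχ, hgχ, hχg⟩ := hχF n hn
    refine ⟨_, add_const_mul_mem_F hgφ hgχ c, ?_⟩
    filter_upwards [hφg, hχg] with x h1 h2
    rw [h1, h2]
  · have h n := ip_add_const_mul_left c (hφ2 n) (hχ2 n) (fr.F_memL2 ψ hψ n)
    simp only [h]
    exact (hφψ ψ hψ).add ((hχψ ψ hψ).const_mul c)

lemma WConv.add_const_mul {ws vs : ℕ → E → ℝ} {w v : E → ℝ}
    (hws : ∀ n, ws n ∈ fr.C) (hvs : ∀ n, vs n ∈ fr.C)
    (hw2 : MemLp w 2 (fr.ν 0)) (hv2 : MemLp v 2 (fr.ν 0))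
    (hw : fr.WConv ws w) (hv : fr.WConv vs v) (c : ℝ) :
    fr.WConv (fun n x => ws n x + c * vs n x) (fun x => w x + c * v x) := by
  intro ψ hψ
  have h n := ip_add_const_mul_left c (memLp_of_mem_C (hws n) n) (memLp_of_mem_C (hvs n) n)
    (memLp_of_mem_C hψ n)
  simp only [h, ip_add_const_mul_left c hw2 hv2 (memLp_of_mem_C hψ 0)]
  exact (hw ψ hψ).add ((hv ψ hψ).const_mul c)

lemma ae_mem_En (n : ℕ) : ∀ᵐ x ∂fr.ν n, x ∈ fr.En n :=
  mem_ae_iff.2 (fr.nullEn n)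

lemma ae_notMem_En {m n : ℕ} (hmn : m ≠ n) : ∀ᵐ x ∂fr.ν n, x ∉ fr.En m :=
  (ae_mem_En n).mono fun _ hx hxm => Set.disjoint_left.1 (fr.disjEn m n hmn) hxm hx

section GlueAlongSubsequence

variable {nk : ℕ → ℕ} {h : ℕ → E → ℝ}

lemma glue_En_ae_eq_zero {m : ℕ} (hm : m ∉ Set.range nk) :
    glue (fun k => fr.En (nk k)) h =ᵐ[fr.ν m] 0 :=
  glue_ae_eq_zero fun k => fr.ae_notMem_En fun hkm => hm ⟨k, hkm⟩

lemma pairwise_disjoint_En_comp (hnk : StrictMono nk) :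
    Pairwise (Disjoint on fun k => fr.En (nk k)) :=
  fun _ _ hjk => fr.disjEn _ _ (hnk.injective.ne hjk)

lemma glue_En_ae_eq (hnk : StrictMono nk) (k : ℕ) :
    glue (fun k => fr.En (nk k)) h =ᵐ[fr.ν (nk k)] h k :=
  glue_ae_eq (pairwise_disjoint_En_comp hnk) (fr.ae_mem_En _)

lemma glue_En_mem_C (hnk : StrictMono nk) (hnk1 : ∀ k, 1 ≤ nk k) (hF : ∀ k, h k ∈ fr.F)
    (hlim : Tendsto (fun k => ip (fr.ν (nk k)) (h k) (h k)) atTop (𝓝 0)) :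
    glue (fun k => fr.En (nk k)) h ∈ fr.C := by
  set ψ := glue (fun k => fr.En (nk k)) h
  have h0 : ψ =ᵐ[fr.ν 0] 0 := glue_En_ae_eq_zero fun ⟨k, hk⟩ => by have := hnk1 k; omega
  have hL2 : ∀ m, MemLp ψ 2 (fr.ν m) := fun m => by
    by_cases hm : m ∈ Set.range nk
    · obtain ⟨k, rfl⟩ := hm
      exact (fr.F_memL2 _ (hF k) _).ae_eq (glue_En_ae_eq hnk k).symm
    · exact MemLp.zero.ae_eq (glue_En_ae_eq_zero hm).symm
  have hnorm : Tendsto (fun m => ip (fr.ν m) ψ ψ) atTop (𝓝 0) := by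
    refine tendsto_of_tendsto_comp_of_eq_zero_off_range hnk ?_
      fun m hm => ip_eq_zero_of_ae_eq_zero (glue_En_ae_eq_zero hm)
    have hk : ∀ k, ip (fr.ν (nk k)) ψ ψ = ip (fr.ν (nk k)) (h k) (h k) := fun k =>
      ip_congr (glue_En_ae_eq hnk k) (glue_En_ae_eq hnk k)
    simpa only [Function.comp_def, hk] using hlim
  have hψ0 : ∀ χ, ip (fr.ν 0) ψ χ = 0 := fun χ => ip_eq_zero_of_ae_eq_zero h0
  refine ⟨⟨measurable_glue (pairwise_disjoint_En_comp hnk) (fun k => fr.measEn _)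
    (fun k => fr.F_measurable _ (hF k)), hL2, hψ0 ψ ▸ hnorm⟩, fun n _ => ?_, fun χ hχ => ?_⟩
  · by_cases hm : n ∈ Set.range nk
    · obtain ⟨k, rfl⟩ := hm
      exact ⟨h k, hF k, glue_En_ae_eq hnk k⟩
    · exact ⟨fun _ => 0, fr.zero_mem_F, glue_En_ae_eq_zero hm⟩
  · rw [hψ0]
    refine squeeze_zero_norm (fun m => abs_ip_le (hL2 m) (fr.F_memL2 χ hχ m)) ?_
    simpa using hnorm.sqrt.mul (fr.F_tendsto χ hχ).sqrt

end GlueAlongSubsequence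

lemma isBoundedUnder_ip_self_of_wConv {ws : ℕ → E → ℝ} {w : E → ℝ} (hws : ∀ n, ws n ∈ fr.C)
    (hconv : fr.WConv ws w) :
    IsBoundedUnder (· ≤ ·) atTop fun n => ip (fr.ν n) (ws n) (ws n) := by
  set b := fun n => ip (fr.ν n) (ws n) (ws n)
  by_contra hunb
  have hfreq : ∀ k : ℕ, ∃ᶠ n in atTop, (k : ℝ) + 1 < b n ∧ 1 ≤ n := fun k =>
    ((not_eventually.1 fun hle => hunb (isBoundedUnder_of_eventually_le hle)).mono
      fun _ hn => not_le.1 hn).and_eventually (eventually_ge_atTop 1)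
  obtain ⟨nk, hnk, hbk⟩ := extraction_forall_of_frequently hfreq
  have hb_pos : ∀ k, 0 < b (nk k) := fun k => lt_trans (by positivity) (hbk k).1
  have hb_top : Tendsto (fun k => b (nk k)) atTop atTop :=
    tendsto_atTop_mono (fun k => (hbk k).1.le)
      (tendsto_atTop_add_const_right _ 1 tendsto_natCast_atTop_atTop)
  choose g hgF hg using fun k => (hws (nk k)).2.1 (nk k) (hbk k).2
  set h := fun k x => (b (nk k))⁻¹ * g k x
  have hgg : ∀ k, ip (fr.ν (nk k)) (g k) (g k) = b (nk k) := fun k =>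
    ip_congr (hg k).symm (hg k).symm
  have hwh : ∀ k, ip (fr.ν (nk k)) (ws (nk k)) (h k) = 1 := fun k => by
    rw [ip_const_mul_right, ← ip_congr EventuallyEq.rfl (hg k)]
    exact inv_mul_cancel₀ (hb_pos k).ne'
  have hhh : ∀ k, ip (fr.ν (nk k)) (h k) (h k) = (b (nk k))⁻¹ := fun k => by
    rw [ip_const_mul_left, ip_const_mul_right, hgg]
    field_simp [(hb_pos k).ne']
  have hψ := glue_En_mem_C (h := h) hnk (fun k => (hbk k).2)
    (fun k => const_mul_mem_F (hgF k) _) (hb_top.inv_tendsto_atTop.congr fun k => (hhh k).symm)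
  have hone : ∀ k, ip (fr.ν (nk k)) (ws (nk k)) (glue (fun k => fr.En (nk k)) h) = 1 :=
    fun k => by rw [ip_congr EventuallyEq.rfl (glue_En_ae_eq hnk k), hwh]
  have hzero : ip (fr.ν 0) w (glue (fun k => fr.En (nk k)) h) = 0 := by
    rw [ip_comm]
    exact ip_eq_zero_of_ae_eq_zero (glue_En_ae_eq_zero fun ⟨k, hk⟩ => by
      have := (hbk k).2; omega)
  have hlim := (hconv _ hψ).comp hnk.tendsto_atTop
  simp only [Function.comp_def, hone, hzero] at hlim
  exact one_ne_zero (tendsto_nhds_unique tendsto_const_nhds hlim)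

end Frame

lemma PreConv.S_add_const_mul_le_liminf {fr : Frame E} {sg : ∀ n, Semigroup2 (fr.ν n)}
    (hpre : PreConv fr sg) {u v : E → ℝ} (hum : Measurable u) (hu2 : MemLp u 2 (fr.ν 0))
    (hvm : Measurable v) (hv2 : MemLp v 2 (fr.ν 0)) {us vs : ℕ → E → ℝ}
    (hus : ∀ n, us n ∈ fr.C ∧ (sg n).memD (us n)) (hvs : ∀ n, vs n ∈ fr.C ∧ (sg n).memD (vs n))
    (huconv : fr.WConv us u) (hvconv : fr.WConv vs v)
    (huA : ∃ M : ℝ, ∀ n, ip (fr.ν n) ((sg n).Af (us n)) ((sg n).Af (us n)) ≤ M)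
    (hvA : ∃ M : ℝ, ∀ n, ip (fr.ν n) ((sg n).Af (vs n)) ((sg n).Af (vs n)) ≤ M) (c : ℝ) :
    (sg 0).S (fun x => u x + c * v x) (fun x => u x + c * v x) ≤
      liminf (fun n => (sg n).S (fun x => us n x + c * vs n x) (fun x => us n x + c * vs n x))
        atTop := by
  obtain ⟨Mu, hMu⟩ := huA
  obtain ⟨Mv, hMv⟩ := hvA
  have hus2 n := Frame.memLp_of_mem_C (hus n).1 n
  have hvs2 n := Frame.memLp_of_mem_C (hvs n).1 n
  exact (hpre.1 (fun x => u x + c * v x) (hum.add (hvm.const_mul c)) (hu2.add (hv2.const_mul c))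
    id strictMono_id (fun n x => us n x + c * vs n x)
    (fun n => ⟨Frame.add_const_mul_mem_C (hus n).1 (hvs n).1 c,
      Semigroup2.memD_add_const_mul (hus n).2 (hvs n).2 (hus2 n) (hvs2 n) c⟩)
    (Frame.WConv.add_const_mul (fun n => (hus n).1) (fun n => (hvs n).1) hu2 hv2 huconv hvconv c)
    ⟨_, fun n => Semigroup2.ip_Af_add_const_mul_le (hus n).2 (hvs n).2 (hus2 n) (hvs2 n) c
      (hMu n) (hMv n)⟩).2

/-- Lemma 2.5 (a): if the forms `S n` pre-converge to `S`, `ws n ∈ D(S n) ∩ 𝓒`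
`w`-converges to `w ∈ L²(E, ν)` with `sup_n ⟨Aₙ wₙ, Aₙ wₙ⟩ₙ < ∞`, and
`vs n ∈ D(S n) ∩ 𝓒` `s`-converges to `v ∈ D(S)` in the sense of condition (ii) of
pre-convergence, then `w ∈ D(S)` and
`Sₙ(vₙ, wₙ) + Sₙ(wₙ, vₙ) → S(v, w) + S(w, v)`. -/
theorem lemma25a (fr : Frame E) (sg : ∀ n, Semigroup2 (fr.ν n))
    (hcontr : ∀ n, (sg n).IsContraction)
    (hpre : PreConv fr sg)
    (w : E → ℝ) (hwm : Measurable w) (hw2 : MemLp w 2 (fr.ν 0))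
    (ws : ℕ → E → ℝ) (hws : ∀ n, ws n ∈ fr.C ∧ (sg n).memD (ws n))
    (hwconv : fr.WConv ws w)
    (hwA : ∃ M : ℝ, ∀ n, ip (fr.ν n) ((sg n).Af (ws n)) ((sg n).Af (ws n)) ≤ M)
    (v : E → ℝ) (hvm : Measurable v) (hv2 : MemLp v 2 (fr.ν 0)) (hvD : (sg 0).memD v)
    (vs : ℕ → E → ℝ) (hvs : ∀ n, vs n ∈ fr.C ∧ (sg n).memD (vs n))
    (hvconv : fr.SConv vs v)
    (hvA : ∃ M : ℝ, ∀ n, ip (fr.ν n) ((sg n).Af (vs n)) ((sg n).Af (vs n)) ≤ M)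
    (hvS : limsup (fun n => (sg n).S (vs n) (vs n)) atTop ≤ (sg 0).S v v) :
    (sg 0).memD w ∧
    Tendsto (fun n => (sg n).S (vs n) (ws n) + (sg n).S (ws n) (vs n)) atTop
      (𝓝 ((sg 0).S v w + (sg 0).S w v)) := by
  have hws2 n := Frame.memLp_of_mem_C (hws n).1 n
  have hvs2 n := Frame.memLp_of_mem_C (hvs n).1 n
  have hwD := (hpre.1 w hwm hw2 id strictMono_id ws hws hwconv hwA).1
  have hexp n s := Semigroup2.S_add_const_mul_self (hws n).2 (hvs n).2 (hws2 n) (hvs2 n) s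
  refine ⟨hwD, tendsto_of_forall_le_liminf_quadratic (f₀ := (sg 0).S w w)
    (isBoundedUnder_S_self hws2 hwA
      (Frame.isBoundedUnder_ip_self_of_wConv (fun n => (hws n).1) hwconv))
    (isBoundedUnder_S_self hvs2 hvA hvconv.2.isBoundedUnder_le) hvS (fun s => ?_) (fun s => ?_)⟩
  · refine isBoundedUnder_of ⟨0, fun n => hexp n s ▸ Semigroup2.S_self_nonneg (hcontr n)
      (Semigroup2.memD_add_const_mul (hws n).2 (hvs n).2 (hws2 n) (hvs2 n) s)
      ((hws2 n).add ((hvs2 n).const_mul s))⟩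
  · simpa only [Semigroup2.S_add_const_mul_self hwD hvD hw2 hv2, hexp] using
      hpre.S_add_const_mul_le_liminf hwm hw2 hvm hv2 hws hvs hwconv hvconv.1 hwA hvA s

end Mosco
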